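/- Let Δ be a connected finite flag complex. The kernel H_Δ of the map G_Δ → ℤ sending all generators to 1 admits a presentation with generators the directed edges of Δ and relators all words e₁ⁿe₂ⁿ⋯e_lⁿ where (e₁,…,e_l) is a directed cycle in Δ, n ∈ ℤ, n ≠ 0, and l ≥ 2; the isomorphism sends the generator e to ιe·(τe)⁻¹ ∈ G_Δ. -/

import Mathlib

/-- The commutator relators of the right-angled Artin group of a graph. -/
def raagRels {V : Type*} (G : SimpleGraph V) : Set (FreeGroup V) :=
  {w | ∃ v v', G.Adj v v' ∧
    w = FreeGroup.of v * FreeGroup.of v' * (FreeGroup.of v)⁻¹ * (FreeGroup.of v')⁻¹}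

/-- The right-angled Artin group of (the flag complex determined by) a graph. -/
abbrev Raag {V : Type*} (G : SimpleGraph V) := PresentedGroup (raagRels G)

/-- A directed cycle of length `l ≥ 2`: a list of darts, cyclically consecutive darts
matching head to tail. -/
def IsDirectedCycle {V : Type*} (G : SimpleGraph V) (c : List G.Dart) : Prop :=
  2 ≤ c.length ∧ ∀ i : Fin c.length,
    (c.get i).toProd.2 = (c.get ⟨(i + 1) % c.length, Nat.mod_lt _ i.pos⟩).toProd.1

/-- The word `e₁ⁿ ⋯ e_lⁿ` in the free group on the darts. -/
def cycleWord {V : Type*} {G : SimpleGraph V} (c : List G.Dart) (n : ℤ) : FreeGroup G.Dart :=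
  (c.map (fun e => FreeGroup.of e ^ n)).prod

/-- The relators `e₁ⁿ⋯e_lⁿ` over directed cycles of length `≥ 2` and nonzero `n`. -/
def cycleRels {V : Type*} (G : SimpleGraph V) : Set (FreeGroup G.Dart) :=
  {w | ∃ (c : List G.Dart) (n : ℤ), IsDirectedCycle G c ∧ n ≠ 0 ∧ w = cycleWord c n}

/-!
Fix a base vertex `v₀` and walks `W v` from each vertex `v` to `v₀`. In the group `P` presented by
the cycle relators, the product of the `e ^ k` along a walk depends only on its endpoints, since
walks with equal endpoints close up to a cycle; write `Y v k` (`walkPow (W v) k`) for it along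
`W v`, so that `Y (ιe) k = e ^ k * Y (τe) k`. Conjugation by `Y (ιe) k` on the generators `e`
respects the cycle relators and gives an action of `ℤ` on `P`, mirroring conjugation by `v₀ ^ k`
on `G_Δ`. Then `v ↦ (Y v 1, 1)` and `(p, k) ↦ α p * v₀ ^ k`, with `α e = ιe * (τe)⁻¹`, are inverse
isomorphisms `G_Δ ≃ P ⋊ ℤ`, under which `G_Δ → ℤ` becomes the projection to `ℤ`; hence
`α : P ≃ H_Δ`.
-/

open SimpleGraph

section SemidirectKer

variable {N H K : Type*} [Group N] [Group H] [Group K] {θ : H →* MulAut N}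

noncomputable def SemidirectProduct.mulEquivKer (e : N ⋊[θ] H ≃* K) (ψ : K →* H)
    (hψ : ψ.comp e.toMonoidHom = SemidirectProduct.rightHom) : N ≃* ψ.ker :=
  (MonoidHom.ofInjective SemidirectProduct.inl_injective).trans <|
    (e.subgroupMap _).trans <| MulEquiv.subgroupCongr <| by
      rw [SemidirectProduct.range_inl_eq_ker_rightHom, ← hψ, ← MonoidHom.comap_ker]
      exact Subgroup.map_comap_eq_self_of_surjective e.surjective _

@[simp]
theorem SemidirectProduct.coe_mulEquivKer_apply (e : N ⋊[θ] H ≃* K) (ψ : K →* H)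
    (hψ : ψ.comp e.toMonoidHom = SemidirectProduct.rightHom) (n : N) :
    (mulEquivKer e ψ hψ n : K) = e (inl n) :=
  rfl

end SemidirectKer

section Graph

variable {V : Type*} {G : SimpleGraph V}

theorem isDirectedCycle_iff_exists_walk {c : List G.Dart} :
    IsDirectedCycle G c ↔ ∃ (u : V) (p : G.Walk u u), p.darts = c ∧ 2 ≤ p.length := by
  constructor
  · rintro ⟨hlen, hc⟩
    have hne : c ≠ [] := List.ne_nil_of_length_pos (by omega)
    have hchain : c.IsChain G.DartAdj := List.isChain_iff_getElem.mpr fun i hi => by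
      simpa [DartAdj, Nat.mod_eq_of_lt (show i + 1 < c.length by omega)] using hc ⟨i, by omega⟩
    have hwrap : (c.getLast hne).snd = (c.head hne).fst := by
      have hmod : (c.length - 1 + 1) % c.length = 0 := by
        rw [Nat.sub_add_cancel (by omega), Nat.mod_self]
      have := hc ⟨c.length - 1, by omega⟩
      simp only [hmod] at this
      simpa [List.getLast_eq_getElem, List.head_eq_getElem_zero] using this
    exact ⟨_, (Walk.ofDarts c hne hchain).copy rfl hwrap, by simp, by simp; omega⟩
  · rintro ⟨u, p, rfl, hp⟩
    refine ⟨by simpa, fun ⟨i, hi⟩ => ?_⟩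
    have hi' : i + 1 ≤ p.length := by simpa using hi
    rcases hi'.lt_or_eq with hlt | heq
    · simp [Nat.mod_eq_of_lt hlt]
    · simp [heq]

theorem SimpleGraph.Walk.prod_map_darts_of_eq_conj {M : Type*} [Group M]
    (h : V → M) (m f : G.Dart → M) (hf : ∀ d, f d = (h d.fst)⁻¹ * m d * h d.snd)
    {u v : V} (p : G.Walk u v) :
    (p.darts.map f).prod = (h u)⁻¹ * (p.darts.map m).prod * h v := by
  induction p with
  | nil => simp
  | cons hadj p ih => simp [hf, ih, mul_assoc]

theorem Raag.commute_of_adj {a b : V} (h : G.Adj a b) :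
    Commute (PresentedGroup.of a : Raag G) (PresentedGroup.of b) := by
  have := PresentedGroup.one_of_mem (rels := raagRels G) ⟨a, b, h, rfl⟩
  rw [map_mul, map_mul, map_mul, map_inv, map_inv, mul_inv_eq_one, mul_inv_eq_iff_eq_mul] at this
  exact this

theorem Raag.mul_inv_zpow_of_adj {a b : V} (h : G.Adj a b) (n : ℤ) :
    ((PresentedGroup.of a : Raag G) * (PresentedGroup.of b)⁻¹) ^ n =
      PresentedGroup.of a ^ n * (PresentedGroup.of b ^ n)⁻¹ := by
  rw [(Raag.commute_of_adj h).inv_right.mul_zpow, inv_zpow]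

variable (G) in
abbrev CycleGroup := PresentedGroup (cycleRels G)

variable {M : Type*} [Group M]

def Raag.lift (f : V → M) (hf : ∀ a b, G.Adj a b → Commute (f a) (f b)) : Raag G →* M :=
  PresentedGroup.toGroup (f := f) <| by
    rintro _ ⟨a, b, hab, rfl⟩
    simp [(hf a b hab).eq]

@[simp]
theorem Raag.lift_of (f : V → M) (hf : ∀ a b, G.Adj a b → Commute (f a) (f b)) (v : V) :
    Raag.lift f hf (PresentedGroup.of v) = f v :=
  PresentedGroup.toGroup.of _

def CycleGroup.lift (f : G.Dart → M)
    (hf : ∀ (u : V) (p : G.Walk u u) (n : ℤ), 2 ≤ p.length → n ≠ 0 →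
      (p.darts.map (f · ^ n)).prod = 1) :
    CycleGroup G →* M :=
  PresentedGroup.toGroup (f := f) <| by
    rintro _ ⟨c, n, hc, hn, rfl⟩
    obtain ⟨u, p, rfl, hp⟩ := isDirectedCycle_iff_exists_walk.mp hc
    simpa [cycleWord, map_list_prod, Function.comp_def] using hf u p n hp hn

@[simp]
theorem CycleGroup.lift_of (f : G.Dart → M)
    (hf : ∀ (u : V) (p : G.Walk u u) (n : ℤ), 2 ≤ p.length → n ≠ 0 →
      (p.darts.map (f · ^ n)).prod = 1) (d : G.Dart) :
    CycleGroup.lift f hf (PresentedGroup.of d) = f d :=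
  PresentedGroup.toGroup.of _

end Graph

namespace CycleGroup

variable {V : Type*} {G : SimpleGraph V}

def walkPow {u v : V} (p : G.Walk u v) (k : ℤ) : CycleGroup G :=
  (p.darts.map fun d => (PresentedGroup.of d : CycleGroup G) ^ k).prod

@[simp]
theorem walkPow_nil {u : V} (k : ℤ) : walkPow (Walk.nil : G.Walk u u) k = 1 := rfl

@[simp]
theorem walkPow_cons {u v w : V} (h : G.Adj u v) (p : G.Walk v w) (k : ℤ) :
    walkPow (Walk.cons h p) k = PresentedGroup.of ⟨(u, v), h⟩ ^ k * walkPow p k := by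
  simp [walkPow]

@[simp]
theorem walkPow_append {u v w : V} (p : G.Walk u v) (q : G.Walk v w) (k : ℤ) :
    walkPow (p.append q) k = walkPow p k * walkPow q k := by
  simp [walkPow]

theorem mk_cycleWord_darts {u v : V} (p : G.Walk u v) (k : ℤ) :
    PresentedGroup.mk (cycleRels G) (cycleWord p.darts k) = walkPow p k := by
  simp only [cycleWord, walkPow, map_list_prod, List.map_map]
  rfl

theorem walkPow_of_closed {u : V} (p : G.Walk u u) (k : ℤ) : walkPow p k = 1 := by
  rcases eq_or_ne k 0 with rfl | hk
  · simp [walkPow]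
  cases p with
  | nil => rfl
  | cons h q =>
    cases q with
    | nil => exact absurd h G.irrefl
    | cons h' r =>
      have hcycle := isDirectedCycle_iff_exists_walk.mpr ⟨u, .cons h (.cons h' r), rfl, by simp⟩
      rw [← mk_cycleWord_darts]
      exact PresentedGroup.one_of_mem ⟨_, k, hcycle, hk, rfl⟩

theorem of_symm (d : G.Dart) :
    (PresentedGroup.of d.symm : CycleGroup G) = (PresentedGroup.of d)⁻¹ := by
  have := walkPow_of_closed (.cons d.adj (.cons d.adj.symm .nil)) 1
  simp only [walkPow_cons, walkPow_nil, zpow_one, mul_one] at this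
  exact eq_inv_of_mul_eq_one_right this

@[simp]
theorem walkPow_reverse {u v : V} (p : G.Walk u v) (k : ℤ) :
    walkPow p.reverse k = (walkPow p k)⁻¹ := by
  induction p with
  | nil => simp
  | cons h p ih =>
    simp [ih, ← inv_zpow, ← of_symm ⟨(_, _), h⟩]

theorem walkPow_eq {u v : V} (p q : G.Walk u v) (k : ℤ) : walkPow p k = walkPow q k := by
  have := walkPow_of_closed (p.append q.reverse) k
  rwa [walkPow_append, walkPow_reverse, mul_inv_eq_one] at this

theorem walkPow_eq_zpow_mul {w : V} (d : G.Dart) (p : G.Walk d.fst w) (q : G.Walk d.snd w)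
    (k : ℤ) : walkPow p k = PresentedGroup.of d ^ k * walkPow q k := by
  rw [walkPow_eq p (.cons d.adj q), walkPow_cons]

def toRaag : CycleGroup G →* Raag G :=
  CycleGroup.lift (fun d => .of d.fst * (.of d.snd)⁻¹) fun u p n _ _ => by
    rw [p.prod_map_darts_of_eq_conj (fun v => (.of v : Raag G) ^ (-n)) (fun _ => 1) _ fun d => by
      simp [Raag.mul_inv_zpow_of_adj d.adj, zpow_neg]]
    simp

@[simp]
theorem toRaag_of (d : G.Dart) : toRaag (.of d) = (.of d.fst : Raag G) * (.of d.snd)⁻¹ :=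
  CycleGroup.lift_of ..

theorem toRaag_walkPow {u v : V} (p : G.Walk u v) (k : ℤ) :
    toRaag (walkPow p k) = (.of u : Raag G) ^ k * ((.of v : Raag G) ^ k)⁻¹ := by
  rw [walkPow, map_list_prod, List.map_map]
  rw [p.prod_map_darts_of_eq_conj (fun v => (.of v : Raag G) ^ (-k)) (fun _ => 1)
    (toRaag ∘ fun d => .of d ^ k) fun d => by
      simp [Raag.mul_inv_zpow_of_adj d.adj, zpow_neg]]
  simp [zpow_neg]

variable {v₀ : V} (W : ∀ v : V, G.Walk v v₀)

theorem conj_walkPow_zpow (d : G.Dart) (k n : ℤ) :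
    ((walkPow (W d.fst) k)⁻¹ * .of d * walkPow (W d.fst) k) ^ n =
      (walkPow (W d.fst) k)⁻¹ * .of d ^ (n + k) * walkPow (W d.snd) k := by
  have hconj := conj_zpow (i := n) (a := (walkPow (W d.fst) k)⁻¹) (b := .of d)
  rw [inv_inv] at hconj
  rw [hconj, walkPow_eq_zpow_mul d (W d.fst) (W d.snd)]
  group

/-- Through `toRaag_walkPow`, this is conjugation by `v₀ ^ k` in the right-angled Artin group. -/
def shift (k : ℤ) : CycleGroup G →* CycleGroup G :=
  CycleGroup.lift (fun d => (walkPow (W d.fst) k)⁻¹ * .of d * walkPow (W d.fst) k)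
    fun u p n _ _ => by
      rw [p.prod_map_darts_of_eq_conj (fun v => walkPow (W v) k) (fun d => .of d ^ (n + k)) _
        (conj_walkPow_zpow W · k n), ← walkPow, walkPow_of_closed, mul_one, inv_mul_cancel]

@[simp]
theorem shift_of (k : ℤ) (d : G.Dart) :
    shift W k (.of d) = (walkPow (W d.fst) k)⁻¹ * .of d * walkPow (W d.fst) k :=
  CycleGroup.lift_of ..

theorem shift_walkPow {u v : V} (p : G.Walk u v) (j k : ℤ) :
    shift W k (walkPow p j) = (walkPow (W u) k)⁻¹ * walkPow p (j + k) * walkPow (W v) k := by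
  rw [walkPow, map_list_prod, List.map_map]
  exact p.prod_map_darts_of_eq_conj (fun v => walkPow (W v) k) (fun d => .of d ^ (j + k))
    (shift W k ∘ fun d => .of d ^ j) fun d => by simp [conj_walkPow_zpow]

theorem shift_add (j k : ℤ) : shift W (j + k) = (shift W k).comp (shift W j) := by
  refine PresentedGroup.ext fun d => ?_
  simp [shift_walkPow, walkPow_of_closed (W v₀)]
  group

@[simp]
theorem shift_zero : shift W 0 = MonoidHom.id _ :=
  PresentedGroup.ext fun d => by simp [walkPow]

def shiftAction : Multiplicative ℤ →* MulAut (CycleGroup G) where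
  toFun k := (shift W k.toAdd).toMulEquiv (shift W (-k.toAdd))
    (by rw [← shift_add, add_neg_cancel, shift_zero])
    (by rw [← shift_add, neg_add_cancel, shift_zero])
  map_one' := MulEquiv.ext fun x => by simp
  map_mul' k j := MulEquiv.ext fun x => by
    change shift W (k.toAdd + j.toAdd) x = shift W k.toAdd (shift W j.toAdd x)
    rw [add_comm, shift_add]
    rfl

theorem shiftAction_apply (k : Multiplicative ℤ) (x : CycleGroup G) :
    shiftAction W k x = shift W k.toAdd x := rfl

theorem toRaag_comp_shift (k : ℤ) :
    toRaag.comp (shift W k) = (MulAut.conj ((.of v₀ : Raag G) ^ k)).toMonoidHom.comp toRaag := by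
  refine PresentedGroup.ext fun d => ?_
  set a : Raag G := .of d.fst ^ k
  set t : Raag G := .of v₀ ^ k
  set x : Raag G := .of d.fst * (.of d.snd)⁻¹
  have hax : a⁻¹ * x * a = x := by
    have hcomm : Commute a x :=
      ((Commute.refl _).mul_right (Raag.commute_of_adj d.adj).inv_right).zpow_left k
    rw [hcomm.inv_left.eq, inv_mul_cancel_right]
  calc toRaag (shift W k (.of d)) = t * (a⁻¹ * x * a) * t⁻¹ := by
        rw [shift_of, map_mul, map_mul, map_inv, toRaag_walkPow, toRaag_of,
          mul_inv_rev, inv_inv]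
        simp only [a, t, x, mul_assoc]
    _ = t * x * t⁻¹ := by rw [hax]

def raagToSemidirect : Raag G →* CycleGroup G ⋊[shiftAction W] Multiplicative ℤ :=
  Raag.lift (fun v => ⟨walkPow (W v) 1, .ofAdd 1⟩) fun a b hab => by
    have hY (k : ℤ) : walkPow (W a) k = .of ⟨(a, b), hab⟩ ^ k * walkPow (W b) k :=
      walkPow_eq_zpow_mul ⟨(a, b), hab⟩ (W a) (W b) k
    refine SemidirectProduct.ext ?_ (mul_comm _ _)
    simp [shiftAction_apply, shift_walkPow, walkPow_of_closed (W v₀), hY]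
    group

@[simp]
theorem raagToSemidirect_of (v : V) :
    raagToSemidirect W (.of v) = ⟨walkPow (W v) 1, .ofAdd 1⟩ :=
  Raag.lift_of ..

def semidirectToRaag : CycleGroup G ⋊[shiftAction W] Multiplicative ℤ →* Raag G :=
  SemidirectProduct.lift toRaag (zpowersHom _ (.of v₀)) fun k => toRaag_comp_shift W k.toAdd

@[simp]
theorem semidirectToRaag_inl (x : CycleGroup G) :
    semidirectToRaag W (.inl x) = toRaag x :=
  SemidirectProduct.lift_inl ..

@[simp]
theorem semidirectToRaag_inr (k : Multiplicative ℤ) :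
    semidirectToRaag W (.inr k) = (.of v₀ : Raag G) ^ k.toAdd :=
  SemidirectProduct.lift_inr ..

def semidirectEquivRaag : CycleGroup G ⋊[shiftAction W] Multiplicative ℤ ≃* Raag G :=
  (semidirectToRaag W).toMulEquiv (raagToSemidirect W)
    (by
      refine SemidirectProduct.hom_ext (PresentedGroup.ext fun d => ?_) (MonoidHom.ext_mint ?_)
      · have hY := walkPow_eq_zpow_mul d (W d.fst) (W d.snd) 1
        simp [SemidirectProduct.mk_eq_inl_mul_inr, hY, mul_assoc]
      · simp [walkPow_of_closed])
    (PresentedGroup.ext fun v => by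
      simp [SemidirectProduct.mk_eq_inl_mul_inr, toRaag_walkPow])

@[simp]
theorem semidirectEquivRaag_apply (x : CycleGroup G ⋊[shiftAction W] Multiplicative ℤ) :
    semidirectEquivRaag W x = semidirectToRaag W x :=
  rfl

end CycleGroup

theorem kernel_presentation_general {V : Type*} (G : SimpleGraph V) (hconn : G.Connected)
    (φ : Raag G →* Multiplicative ℤ)
    (hφ : ∀ v : V, φ (PresentedGroup.of v) = Multiplicative.ofAdd 1) :
    ∃ iso : PresentedGroup (cycleRels G) ≃* φ.ker,
      ∀ e : G.Dart, (iso (PresentedGroup.of e) : Raag G) =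
        PresentedGroup.of e.toProd.1 * (PresentedGroup.of e.toProd.2)⁻¹ := by
  obtain ⟨v₀⟩ := hconn.nonempty
  let W (v : V) : G.Walk v v₀ := (hconn.preconnected v v₀).some
  have hφW : φ.comp (CycleGroup.semidirectEquivRaag W).toMonoidHom =
      SemidirectProduct.rightHom :=
    SemidirectProduct.hom_ext (PresentedGroup.ext fun d => by simp [hφ])
      (MonoidHom.ext_mint (by simp [hφ]))
  exact ⟨SemidirectProduct.mulEquivKer _ φ hφW, fun d => by simp⟩

/-- For a connected finite flag complex `Δ`, the kernel `H_Δ` of the map `G_Δ → ℤ` sending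
all generators to `1` is presented by the directed edges of `Δ` with relators `e₁ⁿ⋯e_lⁿ`
over directed cycles `(e₁,…,e_l)` (`l ≥ 2`) and nonzero integers `n`; the isomorphism sends
the generator `e` to `ιe·(τe)⁻¹`. -/
theorem kernel_presentation {V : Type*} [Fintype V] (G : SimpleGraph V) (hconn : G.Connected)
    (φ : Raag G →* Multiplicative ℤ)
    (hφ : ∀ v : V, φ (PresentedGroup.of v) = Multiplicative.ofAdd 1) :
    ∃ iso : PresentedGroup (cycleRels G) ≃* φ.ker,
      ∀ e : G.Dart, (iso (PresentedGroup.of e) : Raag G) =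
        PresentedGroup.of e.toProd.1 * (PresentedGroup.of e.toProd.2)⁻¹ :=
  kernel_presentation_general G hconn φ hφ
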